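/- arXiv:1809.09316 — 6 statements merged into one kernel-verified Lean document; each statement's English description precedes it below -/
import Mathlib

section
/- Let R be a commutative ring and let s_1,...,s_k be a permutable weak regular sequence in R (i.e., every permutation of it is a weak regular sequence). If I is an ideal of R generated by finitely many monomials in s_2,...,s_k (products of powers of s_2,...,s_k), then for any t in R, t·s_1 ∈ I implies t ∈ I. -/
/-!
Induct on the sum `N` of the total degrees of the generating monomials, for all indices `i`
at once. If every generator has degree at most one, the ideal is `⊤` or is generated by some
`s j` with `j ≠ i`; a permutation putting these `s j` first and `s i` next makes the claim an
instance of weak regularity. Otherwise pick a generator of degree at least two and a variable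
`s j` dividing it, and write `I = J + (s j) * K`, where `J` is generated by the generators free of
`s j` and `K` by the other generators divided by `s j`. Then `s i` is regular modulo `I` as soon
as `s j` is regular modulo `(s i) + J` and `s i` is regular modulo `J + K` and modulo `J`. All
three ideals are again generated by monomials avoiding the relevant variable, with smaller `N`:
in the first, a generator of degree at least two has been traded for `s i`.
-/

/-- The `s`-monomial with exponent vector `α`: `∏ j, s j ^ α j`. -/
def sMon {R : Type*} [CommRing R] {k : ℕ} (s : Fin k → R) (α : Fin k → ℕ) : R :=
  ∏ j, s j ^ α j

/-- `s` is a weak regular sequence: each `s i` is a nonzerodivisor modulo the ideal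
generated by the preceding terms. -/
def IsWeakRegSeq {R : Type*} [CommRing R] {k : ℕ} (s : Fin k → R) : Prop :=
  ∀ i : Fin k, ∀ t : R,
    t * s i ∈ Ideal.span (s '' {j | j < i}) → t ∈ Ideal.span (s '' {j | j < i})

/-- `s` is a permutable weak regular sequence: every permutation of it is a weak
regular sequence. -/
def IsPermWeakRegSeq {R : Type*} [CommRing R] {k : ℕ} (s : Fin k → R) : Prop :=
  ∀ σ : Equiv.Perm (Fin k), IsWeakRegSeq (s ∘ σ)

open scoped Pointwise

section Regular

variable {R : Type*} [CommRing R]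

def IsRegularMod (I : Ideal R) (x : R) : Prop :=
  ∀ t, t * x ∈ I → t ∈ I

theorem isRegularMod_top (x : R) : IsRegularMod ⊤ x :=
  fun _ _ => Submodule.mem_top

theorem IsRegularMod.sup_span_singleton_mul {J K : Ideal R} {a x : R}
    (ha : IsRegularMod (Ideal.span {x} ⊔ J) a) (hJK : IsRegularMod (J ⊔ K) x)
    (hJ : IsRegularMod J x) : IsRegularMod (J ⊔ Ideal.span {a} * K) x := by
  intro t ht
  obtain ⟨y, hy, z, hz, hyz⟩ := Submodule.mem_sup.mp ht
  obtain ⟨w, hw, rfl⟩ := Ideal.mem_span_singleton_mul.mp hz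
  have hwa : w * a ∈ Ideal.span {x} ⊔ J := by
    rw [show w * a = t * x - y by rw [← hyz]; ring]
    exact sub_mem (Ideal.mem_sup_left (Ideal.mul_mem_left _ _ (Ideal.mem_span_singleton_self x)))
      (Ideal.mem_sup_right hy)
  obtain ⟨u, hu, b, hb, hub⟩ := Submodule.mem_sup.mp (ha w hwa)
  obtain ⟨d, rfl⟩ := Ideal.mem_span_singleton'.mp hu
  have hd : d ∈ J ⊔ K := hJK d (by
    rw [show d * x = w - b by rw [← hub]; ring]
    exact sub_mem (Ideal.mem_sup_right hw) (Ideal.mem_sup_left hb))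
  have hrest : t - a * d ∈ J := hJ _ (by
    rw [show (t - a * d) * x = y + a * b by rw [sub_mul, ← hyz, ← hub]; ring]
    exact add_mem hy (Ideal.mul_mem_left _ _ hb))
  have had : a * d ∈ J ⊔ Ideal.span {a} * K := by
    have : Ideal.span {a} * (J ⊔ K) ≤ J ⊔ Ideal.span {a} * K := by
      rw [Ideal.mul_sup]
      exact sup_le_sup_right Ideal.mul_le_right _
    exact this (Ideal.mem_span_singleton_mul.mpr ⟨d, hd, rfl⟩)
  simpa using add_mem (Ideal.mem_sup_left hrest) had

end Regular

open Finset in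
theorem Equiv.Perm.exists_image_Iio_eq_of_notMem {n : ℕ} {S : Finset (Fin n)} {i : Fin n}
    (hi : i ∉ S) : ∃ (σ : Equiv.Perm (Fin n)) (ρ : Fin n), σ ρ = i ∧ σ '' Set.Iio ρ = S := by
  have hS : #S < n := by
    simpa using card_lt_card (ssubset_iff_of_subset (subset_univ S) |>.mpr ⟨i, mem_univ i, hi⟩)
  set ρ : Fin n := ⟨#S, hS⟩
  obtain ⟨τ, hτ⟩ := Equiv.Perm.exists_map_finset_eq (Iio ρ) S (by simp [ρ])
  have hτ' : τ '' Set.Iio ρ = S := by rw [← coe_Iio, ← hτ, coe_map]; rfl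
  have hτρ : τ ρ ∉ S := by
    rw [← mem_coe, ← hτ']
    rintro ⟨j, hj, hjρ⟩
    exact (τ.injective hjρ ▸ hj : ρ < ρ).false
  refine ⟨Equiv.swap (τ ρ) i * τ, ρ, by simp, ?_⟩
  rw [Equiv.Perm.coe_mul, Set.image_comp, hτ']
  conv_rhs => rw [← Set.image_id (S : Set (Fin n))]
  refine Set.image_congr fun x hx => Equiv.swap_apply_of_ne_of_ne ?_ ?_
  · rintro rfl; exact hτρ hx
  · rintro rfl; exact hi hx

section Monomial

variable {R : Type*} [CommRing R] {n : ℕ}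

theorem sMon_zero (s : Fin n → R) : sMon s 0 = 1 := by
  simp [sMon]

theorem sMon_add (s : Fin n → R) (α β : Fin n → ℕ) :
    sMon s (α + β) = sMon s α * sMon s β := by
  simp [sMon, pow_add, Finset.prod_mul_distrib]

theorem sMon_single (s : Fin n → R) (j : Fin n) : sMon s (Pi.single j 1) = s j := by
  rw [sMon, Fintype.prod_eq_single j fun m hm => by simp [hm]]
  simp

theorem single_one_le {α : Fin n → ℕ} {j : Fin n} (hj : α j ≠ 0) : Pi.single j 1 ≤ α := fun m => by
  rcases eq_or_ne m j with rfl | hm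
  · simpa [Nat.one_le_iff_ne_zero] using hj
  · simp [hm]

theorem sMon_eq_mul_sMon_sub_single (s : Fin n → R) {α : Fin n → ℕ} {j : Fin n} (hj : α j ≠ 0) :
    sMon s α = s j * sMon s (α - Pi.single j 1) := by
  rw [← sMon_single s j, ← sMon_add, add_tsub_cancel_of_le (single_one_le hj)]

def totalDeg (α : Fin n → ℕ) : ℕ :=
  ∑ m, α m

theorem totalDeg_add (α β : Fin n → ℕ) : totalDeg (α + β) = totalDeg α + totalDeg β :=
  Finset.sum_add_distrib

theorem totalDeg_eq_zero_iff {α : Fin n → ℕ} : totalDeg α = 0 ↔ α = 0 := by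
  simp [totalDeg, funext_iff]

theorem totalDeg_sub_single_add_one {α : Fin n → ℕ} {j : Fin n} (hj : α j ≠ 0) :
    totalDeg (α - Pi.single j 1) + 1 = totalDeg α := by
  conv_rhs => rw [← add_tsub_cancel_of_le (single_one_le hj), totalDeg_add]
  simp [totalDeg, add_comm]

theorem exists_ne_zero_of_totalDeg_ne_zero {α : Fin n → ℕ} (h : totalDeg α ≠ 0) : ∃ j, α j ≠ 0 := by
  by_contra! hα
  exact h (totalDeg_eq_zero_iff.mpr (funext hα))

theorem exists_eq_single_of_totalDeg_eq_one {α : Fin n → ℕ} (h : totalDeg α = 1) :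
    ∃ j, α = Pi.single j 1 := by
  obtain ⟨j, hj⟩ := exists_ne_zero_of_totalDeg_ne_zero (h ▸ one_ne_zero)
  refine ⟨j, ?_⟩
  have : α - Pi.single j 1 = 0 := by
    rw [← totalDeg_eq_zero_iff]
    have := totalDeg_sub_single_add_one hj
    omega
  rw [← add_tsub_cancel_of_le (single_one_le hj), this, add_zero]

end Monomial

section MonomialIdeal

variable {R : Type*} [CommRing R] {n : ℕ}

def freeOf (j : Fin n) (F : Finset (Fin n → ℕ)) : Finset (Fin n → ℕ) :=
  {α ∈ F | α j = 0}

def divBy (j : Fin n) (F : Finset (Fin n → ℕ)) : Finset (Fin n → ℕ) :=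
  {α ∈ F | α j ≠ 0}.image (· - Pi.single j 1)

theorem span_sMon_union (s : Fin n → R) (F G : Finset (Fin n → ℕ)) :
    Ideal.span (sMon s '' ↑(F ∪ G)) = Ideal.span (sMon s '' F) ⊔ Ideal.span (sMon s '' G) := by
  rw [Finset.coe_union, Set.image_union, Ideal.span_union]

theorem span_sMon_insert_single (s : Fin n → R) (i : Fin n) (F : Finset (Fin n → ℕ)) :
    Ideal.span (sMon s '' ↑(insert (Pi.single i 1) F)) =
      Ideal.span {s i} ⊔ Ideal.span (sMon s '' F) := by
  rw [Finset.coe_insert, Set.image_insert_eq, sMon_single, Ideal.span_insert]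

theorem span_sMon_eq_sup_span_singleton_mul (s : Fin n → R) (j : Fin n) (F : Finset (Fin n → ℕ)) :
    Ideal.span (sMon s '' F) =
      Ideal.span (sMon s '' freeOf j F) ⊔ Ideal.span {s j} * Ideal.span (sMon s '' divBy j F) := by
  have hdiv : ({s j} : Set R) * sMon s '' divBy j F =
      sMon s '' ↑({α ∈ F | α j ≠ 0} : Finset _) := by
    rw [Set.singleton_mul, divBy, Finset.coe_image, ← Set.image_comp, ← Set.image_comp]
    exact Set.image_congr fun α hα =>
      (sMon_eq_mul_sMon_sub_single s (Finset.mem_filter.mp hα).2).symm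
  rw [Ideal.span_mul_span', hdiv, ← span_sMon_union, freeOf, Finset.filter_union_filter_not_eq]

def degSum (F : Finset (Fin n → ℕ)) : ℕ :=
  ∑ α ∈ F, totalDeg α

theorem degSum_union_le (F G : Finset (Fin n → ℕ)) : degSum (F ∪ G) ≤ degSum F + degSum G := by
  rw [degSum, degSum, degSum, ← Finset.sum_union_inter]
  exact Nat.le_add_right _ _

theorem degSum_freeOf_add (j : Fin n) (F : Finset (Fin n → ℕ)) :
    degSum (freeOf j F) + degSum {α ∈ F | α j ≠ 0} = degSum F :=
  Finset.sum_filter_add_sum_filter_not F _ _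

theorem degSum_divBy_lt {j : Fin n} {F : Finset (Fin n → ℕ)} {α : Fin n → ℕ} (hα : α ∈ F)
    (hj : α j ≠ 0) : degSum (divBy j F) < degSum {α ∈ F | α j ≠ 0} := by
  have hA : ({α ∈ F | α j ≠ 0} : Finset _).Nonempty := ⟨α, Finset.mem_filter.mpr ⟨hα, hj⟩⟩
  calc degSum (divBy j F)
      ≤ ∑ β ∈ {α ∈ F | α j ≠ 0}, totalDeg (β - Pi.single j 1) :=
        Finset.sum_image_le_of_nonneg fun _ _ => Nat.zero_le _
    _ < ∑ β ∈ {α ∈ F | α j ≠ 0}, totalDeg β :=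
        Finset.sum_lt_sum_of_nonempty hA fun β hβ => by
          rw [← totalDeg_sub_single_add_one (Finset.mem_filter.mp hβ).2]
          exact Nat.lt_succ_self _

theorem totalDeg_le_degSum_filter {j : Fin n} {F : Finset (Fin n → ℕ)} {α : Fin n → ℕ}
    (hα : α ∈ F) (hj : α j ≠ 0) : totalDeg α ≤ degSum {α ∈ F | α j ≠ 0} :=
  Finset.single_le_sum (fun _ _ => Nat.zero_le _) (Finset.mem_filter.mpr ⟨hα, hj⟩)

end MonomialIdeal

section PermWeakRegSeq

variable {R : Type*} [CommRing R] {n : ℕ} {s : Fin n → R}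

theorem IsPermWeakRegSeq.isRegularMod_span_image (hs : IsPermWeakRegSeq s) {S : Finset (Fin n)}
    {i : Fin n} (hi : i ∉ S) : IsRegularMod (Ideal.span (s '' S)) (s i) := by
  obtain ⟨σ, ρ, hσρ, hσ⟩ := Equiv.Perm.exists_image_Iio_eq_of_notMem hi
  have himage : (s ∘ σ) '' {j | j < ρ} = s '' S := by rw [Set.image_comp, ← hσ]; rfl
  have := hs σ ρ
  rwa [himage, Function.comp_apply, hσρ] at this

theorem IsPermWeakRegSeq.isRegularMod_span_sMon_of_totalDeg_le_one (hs : IsPermWeakRegSeq s)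
    {i : Fin n} {F : Finset (Fin n → ℕ)} (hFi : ∀ α ∈ F, α i = 0)
    (hF : ∀ α ∈ F, totalDeg α ≤ 1) : IsRegularMod (Ideal.span (sMon s '' F)) (s i) := by
  by_cases h0 : (0 : Fin n → ℕ) ∈ F
  · have hone : (1 : R) ∈ sMon s '' F := ⟨0, h0, sMon_zero s⟩
    rw [(Ideal.eq_top_iff_one _).mpr (Ideal.subset_span hone)]
    exact isRegularMod_top _
  have hsingle : ∀ α ∈ F, ∃ j, α = Pi.single j 1 := fun α hα =>
    exists_eq_single_of_totalDeg_eq_one <| le_antisymm (hF α hα) <|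
      Nat.one_le_iff_ne_zero.mpr fun h => h0 (totalDeg_eq_zero_iff.mp h ▸ hα)
  set S : Finset (Fin n) := {j | Pi.single j 1 ∈ F}
  have hS : sMon s '' F = s '' S := by
    ext x
    constructor
    · rintro ⟨α, hα, rfl⟩
      obtain ⟨j, rfl⟩ := hsingle α hα
      exact ⟨j, by simpa [S] using hα, (sMon_single s j).symm⟩
    · rintro ⟨j, hj, rfl⟩
      exact ⟨Pi.single j 1, by simpa [S] using hj, sMon_single s j⟩
  have hi : i ∉ S := fun h => absurd (hFi _ (by simpa [S] using h)) (by simp)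
  rw [hS]
  exact hs.isRegularMod_span_image hi

theorem IsPermWeakRegSeq.isRegularMod_span_sMon (hs : IsPermWeakRegSeq s) (i : Fin n)
    (F : Finset (Fin n → ℕ)) (hFi : ∀ α ∈ F, α i = 0) :
    IsRegularMod (Ideal.span (sMon s '' F)) (s i) := by
  induction hN : degSum F using Nat.strong_induction_on generalizing i F with
  | _ N ih =>
  by_cases hlin : ∀ α ∈ F, totalDeg α ≤ 1
  · exact hs.isRegularMod_span_sMon_of_totalDeg_le_one hFi hlin
  obtain ⟨α, hαF, hα⟩ : ∃ α ∈ F, 1 < totalDeg α := by simpa using hlin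
  obtain ⟨j, hj⟩ := exists_ne_zero_of_totalDeg_ne_zero (by omega : totalDeg α ≠ 0)
  have hji : j ≠ i := fun h => hj (h ▸ hFi α hαF)
  have hsplit := degSum_freeOf_add j F
  have hA := totalDeg_le_degSum_filter hαF hj
  have hfree : ∀ β ∈ freeOf j F, β i = 0 := fun β hβ => hFi β (Finset.mem_filter.mp hβ).1
  rw [span_sMon_eq_sup_span_singleton_mul s j F]
  refine IsRegularMod.sup_span_singleton_mul ?_ ?_ (ih _ (by omega) i _ hfree rfl)
  · rw [← span_sMon_insert_single]
    refine ih _ ?_ j _ ?_ rfl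
    · have := degSum_union_le {Pi.single i 1} (freeOf j F)
      have hsi : degSum {(Pi.single i 1 : Fin n → ℕ)} = 1 := by simp [degSum, totalDeg]
      rw [Finset.singleton_union] at this
      omega
    · intro β hβ
      rcases Finset.mem_insert.mp hβ with rfl | hβ
      · simp [hji]
      · exact (Finset.mem_filter.mp hβ).2
  · rw [← span_sMon_union]
    refine ih _ ?_ i _ ?_ rfl
    · have := degSum_union_le (freeOf j F) (divBy j F)
      have := degSum_divBy_lt hαF hj
      omega
    · intro β hβ
      rcases Finset.mem_union.mp hβ with hβ | hβ
      · exact hfree β hβ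
      · obtain ⟨γ, hγ, rfl⟩ := Finset.mem_image.mp hβ
        simp [hji.symm, hFi γ (Finset.mem_filter.mp hγ).1]

end PermWeakRegSeq

/-- If `I` is generated by finitely many monomials in `s 1, …, s k` (i.e. `s`-monomials whose
exponent of `s 0` is zero), then `t * s 0 ∈ I` implies `t ∈ I`. -/
theorem stmt0 {R : Type*} [CommRing R] {k : ℕ} (s : Fin (k + 1) → R)
    (hs : IsPermWeakRegSeq s) (F : Finset (Fin (k + 1) → ℕ))
    (hF : ∀ α ∈ F, α 0 = 0) (t : R)
    (ht : t * s 0 ∈ Ideal.span (sMon s '' ↑F)) :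
    t ∈ Ideal.span (sMon s '' ↑F) :=
  hs.isRegularMod_span_sMon 0 F hF t ht
end

section
/- Let A be an ordinary matrix over a commutative ring R. Then the ideal I_bin(A) generated by all binary quasi-minors of A equals the ideal I_2(A) generated by the 2×2 minors of A. -/
/-!
Modulo the ideal of `2 × 2` minors, a transposition `swap x y` applied to a permutation `ν`
changes exactly two factors of `∏ l, B l (ν l)`, and the change is a `2 × 2` minor; since
transpositions generate the symmetric group, all permutation products of a square submatrix
agree modulo that ideal. Conversely, a `2 × 2` minor is a binary quasi-minor with `n = 2`.
-/

/-- `x` is a binary quasi-minor of the matrix `A`: there are `n` distinct rows, `n` distinct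
columns, and permutations `σ, τ` of `Fin n` with `σ l ≠ τ l` for all `l`, such that
`x = ∏ l, A (ρ l) (γ (σ l)) − ∏ l, A (ρ l) (γ (τ l))` (the chosen entries form a binary
subquasi-matrix: exactly two per occupied row and column). -/
def IsBinaryQuasiMinor {R : Type*} [CommRing R] {p q : ℕ}
    (A : Matrix (Fin p) (Fin q) R) (x : R) : Prop :=
  ∃ (n : ℕ) (ρ : Fin n ↪ Fin p) (γ : Fin n ↪ Fin q) (σ τ : Equiv.Perm (Fin n)),
    (∀ l, σ l ≠ τ l) ∧
    x = ∏ l, A (ρ l) (γ (σ l)) - ∏ l, A (ρ l) (γ (τ l))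

open Finset in
theorem Fintype.prod_eq_prod_of_mul_eq_mul_of_eqOn_compl_pair {ι M : Type*} [CommMonoid M]
    [Fintype ι] [DecidableEq ι] {f g : ι → M} {i j : ι} (hij : i ≠ j)
    (hpair : f i * f j = g i * g j) (hrest : ∀ l, l ≠ i → l ≠ j → f l = g l) :
    ∏ l, f l = ∏ l, g l := by
  rw [← prod_mul_prod_compl {i, j} f, ← prod_mul_prod_compl {i, j} g, prod_pair hij,
    prod_pair hij, hpair]
  refine congrArg _ (Finset.prod_congr rfl fun l hl => ?_)
  simp only [mem_compl, mem_insert, mem_singleton, not_or] at hl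
  exact hrest l hl.1 hl.2

theorem prod_perm_eq_prod_perm_of_two_minors_eq {M n : Type*} [CommMonoid M] [Fintype n]
    [DecidableEq n] (B : n → n → M)
    (hB : ∀ i j k l, i ≠ j → k ≠ l → B i k * B j l = B i l * B j k)
    (σ τ : Equiv.Perm n) : ∏ l, B l (σ l) = ∏ l, B l (τ l) := by
  have prod_swap_mul : ∀ (x y : n) (ν : Equiv.Perm n), x ≠ y →
      ∏ l, B l ((Equiv.swap x y * ν) l) = ∏ l, B l (ν l) := by
    intro x y ν hxy
    refine Fintype.prod_eq_prod_of_mul_eq_mul_of_eqOn_compl_pair (i := ν.symm x) (j := ν.symm y)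
      (by simpa using hxy) ?_ fun l hli hlj => ?_
    · simpa using hB _ _ _ _ (by simpa using hxy) hxy.symm
    · rw [Equiv.Perm.mul_apply, Equiv.swap_apply_of_ne_of_ne] <;>
        rwa [Ne, ← Equiv.eq_symm_apply]
  have prod_eq_prod_diag : ∀ σ : Equiv.Perm n, ∏ l, B l (σ l) = ∏ l, B l l := fun σ =>
    Equiv.Perm.swap_induction_on σ (by simp) fun ν x y hxy ih =>
      (prod_swap_mul x y ν hxy).trans ih
  rw [prod_eq_prod_diag σ, prod_eq_prod_diag τ]

theorem isBinaryQuasiMinor_of_two_minor {R : Type*} [CommRing R] {p q : ℕ}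
    (A : Matrix (Fin p) (Fin q) R) {i j : Fin p} {k l : Fin q} (hij : i ≠ j) (hkl : k ≠ l) :
    IsBinaryQuasiMinor A (A i k * A j l - A i l * A j k) :=
  ⟨2, ⟨![i, j], by simp [hij]⟩, ⟨![k, l], by simp [hkl]⟩, 1, Equiv.swap 0 1, by decide,
    by simp [Fin.prod_univ_two]⟩

/-- For an ordinary matrix `A`, the ideal of binary quasi-minors equals the ideal of
`2 × 2` minors. -/
theorem stmt6 {R : Type*} [CommRing R] {p q : ℕ} (A : Matrix (Fin p) (Fin q) R) :
    Ideal.span {x | IsBinaryQuasiMinor A x} =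
      Ideal.span {x | ∃ i j : Fin p, ∃ k l : Fin q, i ≠ j ∧ k ≠ l ∧
        x = A i k * A j l - A i l * A j k} := by
  set I := Ideal.span {x | ∃ i j : Fin p, ∃ k l : Fin q, i ≠ j ∧ k ≠ l ∧
    x = A i k * A j l - A i l * A j k}
  refine le_antisymm (Ideal.span_le.2 ?_) (Ideal.span_le.2 ?_)
  · rintro _ ⟨n, ρ, γ, σ, τ, -, rfl⟩
    rw [SetLike.mem_coe, ← Ideal.Quotient.eq, map_prod, map_prod]
    refine prod_perm_eq_prod_perm_of_two_minors_eq
      (fun a b => Ideal.Quotient.mk I (A (ρ a) (γ b))) (fun a b c d hab hcd => ?_) σ τ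
    simp only [← map_mul, Ideal.Quotient.eq]
    exact Ideal.subset_span ⟨_, _, _, _, ρ.injective.ne hab, γ.injective.ne hcd, rfl⟩
  · rintro _ ⟨i, j, k, l, hij, hkl, rfl⟩
    exact Ideal.subset_span (isBinaryQuasiMinor_of_two_minor A hij hkl)
end

section
/- Every binary quasi-minor of an ordinary matrix A of size n (i.e., of the form V_1···V_n − W_1···W_n with the V's and W's entries of A forming a binary subquasi-matrix) is an R-linear combination of 2×2 minors of A. -/
/-!
Modulo the ideal `I` spanned by the `2 × 2` minors, the entries of `A` satisfy
`A i k * A j l = A i l * A j k`, so exchanging the columns assigned to two rows does not change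
a product `∏ l, A (ρ l) (γ (σ l))`. As transpositions generate the symmetric group, all these
products agree modulo `I`, and so their differences lie in `I`.
-/

open Finset Equiv

section CommMonoid

variable {ι M : Type*} [Fintype ι] [DecidableEq ι] [CommMonoid M]

theorem prod_apply_mul_swap_eq (B : Matrix ι ι M) (hB : ∀ i j k l, B i k * B j l = B i l * B j k)
    (σ : Perm ι) {a b : ι} (hab : a ≠ b) :
    ∏ i, B i ((σ * swap a b) i) = ∏ i, B i (σ i) := by
  have hrest : ∀ i ∈ ({a, b} : Finset ι)ᶜ, B i ((σ * swap a b) i) = B i (σ i) := by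
    intro i hi
    simp only [mem_compl, mem_insert, mem_singleton, not_or] at hi
    rw [Perm.mul_apply, swap_apply_of_ne_of_ne hi.1 hi.2]
  rw [← prod_compl_mul_prod {a, b}, ← prod_compl_mul_prod {a, b} (fun i => B i (σ i)),
    prod_congr rfl hrest, prod_pair hab, prod_pair hab]
  simp only [Perm.mul_apply, swap_apply_left, swap_apply_right]
  rw [hB]

theorem prod_apply_perm_eq_prod_diag (B : Matrix ι ι M)
    (hB : ∀ i j k l, B i k * B j l = B i l * B j k) (σ : Perm ι) :
    ∏ i, B i (σ i) = ∏ i, B i i := by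
  induction σ using Perm.swap_induction_on' with
  | one => rfl
  | mul_swap σ a b hab ih => rw [prod_apply_mul_swap_eq B hB σ hab, ih]

end CommMonoid

section CommRing

variable {R m n : Type*} [CommRing R]

def twoMinors (A : Matrix m n R) : Set R :=
  {y | ∃ i j k l, i ≠ j ∧ k ≠ l ∧ y = A i k * A j l - A i l * A j k}

theorem mk_mul_eq_mk_mul_mod_twoMinors (A : Matrix m n R) (i j : m) (k l : n) :
    Ideal.Quotient.mk (Ideal.span (twoMinors A)) (A i k * A j l) =
      Ideal.Quotient.mk (Ideal.span (twoMinors A)) (A i l * A j k) := by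
  by_cases hij : i = j
  · rw [hij, mul_comm]
  by_cases hkl : k = l
  · rw [hkl]
  exact Ideal.Quotient.eq.mpr (Ideal.subset_span ⟨i, j, k, l, hij, hkl, rfl⟩)

end CommRing

/-- Every binary quasi-minor of an ordinary matrix `A` is an `R`-linear combination of the
`2 × 2` minors of `A`. -/
theorem stmt7 {R : Type*} [CommRing R] {p q : ℕ} (A : Matrix (Fin p) (Fin q) R)
    (x : R) (hx : IsBinaryQuasiMinor A x) :
    x ∈ Submodule.span R {y : R | ∃ i j : Fin p, ∃ k l : Fin q, i ≠ j ∧ k ≠ l ∧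
      y = A i k * A j l - A i l * A j k} := by
  obtain ⟨n, ρ, γ, σ, τ, -, rfl⟩ := hx
  change _ ∈ Ideal.span (twoMinors A)
  let B : Matrix (Fin n) (Fin n) (R ⧸ Ideal.span (twoMinors A)) :=
    fun i k => Ideal.Quotient.mk _ (A (ρ i) (γ k))
  have hB : ∀ i j k l, B i k * B j l = B i l * B j k := fun i j k l => by
    simpa only [map_mul] using mk_mul_eq_mk_mul_mod_twoMinors A (ρ i) (ρ j) (γ k) (γ l)
  rw [← Ideal.Quotient.eq_zero_iff_mem, map_sub, map_prod, map_prod, sub_eq_zero]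
  exact (prod_apply_perm_eq_prod_diag B hB σ).trans (prod_apply_perm_eq_prod_diag B hB τ).symm
end

section
/- Let n ≥ 2 and let f = V_1···V_n − W_1···W_n and g = Y_1···Y_m − Z_1···Z_m be binary quasi-minors of a generic quasi-matrix with distinct-variable entries, with leading terms V_1···V_n and Y_1···Y_m. Then the S-polynomial S(f,g) reduces to zero modulo the set of all binary quasi-minors of the quasi-matrix, for any monomial order. -/
/-!
Both `S(f, g)` and every binary quasi-minor are binomials `x^A - x^B` of the generic
quasi-matrix whose two monomials, read as multisets of cells, have the same row sums and the
same column sums. Conversely, if `A ≠ B` have equal margins, following a cell of `A` to a cell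
of `B` in its column and then to a cell of `A` in that row eventually closes an alternating
cycle, which is a binary quasi-minor `x^a - x^b` with `a ≤ A`, `b ≤ B`. Subtracting a monomial
multiple of it replaces the side whose cycle part is the larger one by a strictly smaller
monomial with the same margins; since a monomial order on finitely many variables is a
well-order (Dickson), this terminates in a standard representation of `x^A - x^B`.
-/

open MvPolynomial

/-- A monomial order on the monomials (exponent vectors) of `MvPolynomial σ R`:
a linear order on `σ →₀ ℕ`, compatible with addition, for which `0` is least. -/
structure MonomialOrd (σ : Type*) where
  le : (σ →₀ ℕ) → (σ →₀ ℕ) → Prop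
  refl : ∀ a, le a a
  antisymm : ∀ a b, le a b → le b a → a = b
  trans : ∀ a b c, le a b → le b c → le a c
  total : ∀ a b, le a b ∨ le b a
  add_right : ∀ a b c, le a b → le (a + c) (b + c)
  zero_le : ∀ a, le 0 a

/-- `δ` is the leading monomial of `f` with respect to the monomial order `m`
(by convention the leading monomial of `0` is `0`). -/
def IsLM {R : Type*} [CommRing R] {σ : Type*} (m : MonomialOrd σ)
    (f : MvPolynomial σ R) (δ : σ →₀ ℕ) : Prop :=
  (f = 0 ∧ δ = 0) ∨ (MvPolynomial.coeff δ f ≠ 0 ∧ ∀ e ∈ f.support, m.le e δ)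

/-- The set of leading terms of the members of `G`. -/
def ltSet {R : Type*} [CommRing R] {σ : Type*} (m : MonomialOrd σ)
    (G : Set (MvPolynomial σ R)) : Set (MvPolynomial σ R) :=
  {g | ∃ f ∈ G, f ≠ 0 ∧ ∃ δ, IsLM m f δ ∧
    g = MvPolynomial.monomial δ (MvPolynomial.coeff δ f)}

/-- `G` is a Gröbner basis of the ideal `I` w.r.t. the monomial order `m`: `G ⊆ I` and the
leading terms of the members of `G` generate the ideal of leading terms of `I`. -/
def IsGroebnerBasis {R : Type*} [CommRing R] {σ : Type*} (m : MonomialOrd σ)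
    (G : Set (MvPolynomial σ R)) (I : Ideal (MvPolynomial σ R)) : Prop :=
  G ⊆ (I : Set (MvPolynomial σ R)) ∧
    Ideal.span (ltSet m G) = Ideal.span (ltSet m (I : Set (MvPolynomial σ R)))

/-- `f` reduces to zero modulo `G`: `f = ∑ pᵢ gᵢ` with `gᵢ ∈ G` and
`lm(pᵢ)·lm(gᵢ) ≤ lm(f)` whenever `pᵢ ≠ 0`. -/
def RedZero {R : Type*} [CommRing R] {σ : Type*} (m : MonomialOrd σ)
    (G : Set (MvPolynomial σ R)) (f : MvPolynomial σ R) : Prop :=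
  ∃ (N : ℕ) (g p : Fin N → MvPolynomial σ R) (δ : σ →₀ ℕ),
    IsLM m f δ ∧ (∀ i, g i ∈ G) ∧ f = ∑ i, p i * g i ∧
    ∀ i, p i ≠ 0 → ∀ δp δg, IsLM m (p i) δp → IsLM m (g i) δg → m.le (δp + δg) δ

/-- `x` is a binary quasi-minor of the quasi-matrix with entry function `e`. -/
def IsBinQM {S : Type*} [CommRing S] {ι κ : Type*} (e : ι → κ → Option S) (x : S) : Prop :=
  ∃ (nn : ℕ) (ρ : Fin nn ↪ ι) (γ : Fin nn ↪ κ) (σ τ : Equiv.Perm (Fin nn))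
    (v w : Fin nn → S),
    (∀ l, σ l ≠ τ l) ∧ (∀ l, e (ρ l) (γ (σ l)) = some (v l)) ∧
    (∀ l, e (ρ l) (γ (τ l)) = some (w l)) ∧
    x = ∏ l, v l - ∏ l, w l

open Classical in
/-- The generic quasi-matrix with occupied positions `P`, whose entries are the distinct
indeterminates `X ⟨(i,j), _⟩`. -/
noncomputable def genEntries (R : Type*) [CommRing R] {p q : ℕ}
    (P : Set (Fin p × Fin q)) : Fin p → Fin q → Option (MvPolynomial P R) :=
  fun i j => if h : (i, j) ∈ P then some (MvPolynomial.X ⟨(i, j), h⟩) else none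

open Function

section Margins

variable {ι κ : Type*} {P : Set (ι × κ)}

noncomputable def margins : (P →₀ ℕ) →+ (ι →₀ ℕ) × (κ →₀ ℕ) :=
  (Finsupp.mapDomain.addMonoidHom fun x : P => x.1.1).prod
    (Finsupp.mapDomain.addMonoidHom fun x : P => x.1.2)

lemma margins_apply (d : P →₀ ℕ) :
    margins d = (d.mapDomain fun x => x.1.1, d.mapDomain fun x => x.1.2) := rfl

lemma margins_single (x : P) (n : ℕ) :
    margins (Finsupp.single x n) = (Finsupp.single x.1.1 n, Finsupp.single x.1.2 n) := by
  simp [margins_apply, Finsupp.mapDomain_single]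

lemma margins_tsub_add {a c d : P →₀ ℕ} (hc : c ≤ a) (hcd : margins c = margins d) :
    margins (a - c + d) = margins a := by
  rw [map_add, ← hcd, ← map_add, tsub_add_cancel_of_le hc]

end Margins

lemma exists_mem_support_of_mapDomain_eq {α β : Type*} {f : α → β} {d e : α →₀ ℕ}
    (h : d.mapDomain f = e.mapDomain f) {x : α} (hx : x ∈ d.support) :
    ∃ y ∈ e.support, f y = f x := by
  by_contra! hne
  have he : e.mapDomain f (f x) = 0 :=
    Finsupp.mapDomain_of_not_mem_image_support fun ⟨y, hy, hyx⟩ => hne y hy hyx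
  have hd : d x ≤ d.mapDomain f (f x) := by
    simpa [Finsupp.mapDomain_single] using
      Finsupp.mapDomain_mono (f := f) (Finsupp.single_le_iff.2 (le_refl (d x))) (f x)
  rw [h, he] at hd
  exact Finsupp.mem_support_iff.1 hx (Nat.le_zero.1 hd)

lemma sum_single_one_le {α ν : Type*} [Fintype ν] {A : ν → α} (hA : Injective A)
    {d : α →₀ ℕ} (hd : ∀ l, A l ∈ d.support) : ∑ l, Finsupp.single (A l) 1 ≤ d := by
  classical
  intro x
  rw [Finsupp.finsetSum_apply]
  by_cases hx : x ∈ Set.range A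
  · obtain ⟨l, rfl⟩ := hx
    rw [Finset.sum_eq_single l (fun k _ hk => Finsupp.single_eq_of_ne (hA.ne hk).symm)
      (by simp), Finsupp.single_eq_same]
    exact Nat.one_le_iff_ne_zero.2 (Finsupp.mem_support_iff.1 (hd l))
  · rw [Finset.sum_eq_zero fun k _ => Finsupp.single_eq_of_ne fun h => hx ⟨k, h.symm⟩]
    exact Nat.zero_le _

namespace MonomialOrd

variable {σ : Type*} (m : MonomialOrd σ)

def lt (a b : σ →₀ ℕ) : Prop := m.le a b ∧ a ≠ b

lemma le_of_pointwise_le {a b : σ →₀ ℕ} (h : a ≤ b) : m.le a b := by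
  simpa [tsub_add_cancel_of_le h] using m.add_right 0 (b - a) a (m.zero_le _)

lemma tsub_add_lt {a c d : σ →₀ ℕ} (hc : c ≤ a) (hdc : m.lt d c) : m.lt (a - c + d) a := by
  constructor
  · have h := m.add_right d c (a - c) hdc.1
    rwa [add_comm c, tsub_add_cancel_of_le hc, add_comm] at h
  · intro h
    exact hdc.2 (add_left_cancel (h.trans (tsub_add_cancel_of_le hc).symm))

lemma wellFounded_lt [Finite σ] : WellFounded m.lt := by
  have : IsPreorder (σ →₀ ℕ) m.le := { refl := m.refl, trans := m.trans }
  have hwqo : WellQuasiOrdered m.le := fun f => by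
    obtain ⟨i, j, hij, h⟩ := wellQuasiOrdered_le f
    exact ⟨i, j, hij, m.le_of_pointwise_le h⟩
  exact Subrelation.wf (fun {a b} h => ⟨h.1, fun h' => h.2 (m.antisymm a b h.1 h')⟩)
    hwqo.wellFounded

end MonomialOrd

section LeadingMonomial

variable {σ R : Type*} [CommRing R] (m : MonomialOrd σ)

lemma IsLM.unique {f : MvPolynomial σ R} {δ δ' : σ →₀ ℕ} (h : IsLM m f δ) (h' : IsLM m f δ') :
    δ = δ' := by
  rcases h with ⟨rfl, rfl⟩ | ⟨hc, hmax⟩ <;> rcases h' with ⟨hf, rfl⟩ | ⟨hc', hmax'⟩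
  · rfl
  · simp at hc'
  · simp [hf] at hc
  · exact m.antisymm _ _ (hmax' δ (mem_support_iff.2 hc)) (hmax δ' (mem_support_iff.2 hc'))

variable [Nontrivial R]

lemma isLM_monomial (e : σ →₀ ℕ) : IsLM m (monomial e (1 : R)) e := by
  refine Or.inr ⟨by classical simp [coeff_monomial], fun e' he' => ?_⟩
  rw [Finset.mem_singleton.1 (support_monomial_subset he')]
  exact m.refl e

lemma isLM_monomial_sub_monomial {a b c : σ →₀ ℕ} (hab : a ≠ b) (hac : m.le a c)
    (hbc : m.le b c) (hc : c = a ∨ c = b) : IsLM m (monomial a (1 : R) - monomial b 1) c := by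
  classical
  refine Or.inr ⟨?_, fun e he => ?_⟩
  · rcases hc with rfl | rfl <;> simp [coeff_monomial, hab, hab.symm]
  · rcases Finset.mem_union.1 (support_sub σ _ _ he) with h | h <;>
      rw [Finset.mem_singleton.1 (support_monomial_subset h)] <;> assumption

end LeadingMonomial

section BoundedRep

variable {σ R : Type*} [CommRing R] (m : MonomialOrd σ) (G : Set (MvPolynomial σ R))

def HasBoundedRep (f : MvPolynomial σ R) (δ : σ →₀ ℕ) : Prop :=
  ∃ (N : ℕ) (g p : Fin N → MvPolynomial σ R), (∀ i, g i ∈ G) ∧ f = ∑ i, p i * g i ∧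
    ∀ i, p i ≠ 0 → ∀ δp δg, IsLM m (p i) δp → IsLM m (g i) δg → m.le (δp + δg) δ

lemma hasBoundedRep_zero (δ : σ →₀ ℕ) : HasBoundedRep m G 0 δ :=
  ⟨0, Fin.elim0, Fin.elim0, Fin.rec0, by simp, Fin.rec0⟩

variable {m G}

lemma HasBoundedRep.monomial_mul_add [Nontrivial R] {f g : MvPolynomial σ R} {e δg δ : σ →₀ ℕ}
    (hf : HasBoundedRep m G f δ) (hg : g ∈ G) (hlm : IsLM m g δg) (hle : m.le (e + δg) δ) :
    HasBoundedRep m G (monomial e 1 * g + f) δ := by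
  obtain ⟨N, gs, ps, hgs, rfl, hbound⟩ := hf
  refine ⟨N + 1, Fin.cons g gs, Fin.cons (monomial e 1) ps, Fin.cases hg hgs,
    by simp [Fin.sum_univ_succ], Fin.cases ?_ hbound⟩
  intro _ δp δg' hp hg'
  rwa [← (isLM_monomial m e).unique m hp, ← hlm.unique m hg']

lemma RedZero.of_hasBoundedRep {f : MvPolynomial σ R} {δ : σ →₀ ℕ} (hlm : IsLM m f δ)
    (h : HasBoundedRep m G f δ) : RedZero m G f :=
  let ⟨N, g, p, hg, hsum, hbound⟩ := h
  ⟨N, g, p, δ, hlm, hg, hsum, hbound⟩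

lemma redZero_zero : RedZero m G 0 :=
  .of_hasBoundedRep (Or.inl ⟨rfl, rfl⟩) (hasBoundedRep_zero m G 0)

end BoundedRep

section QuasiMinors

variable {R : Type*} [CommRing R] {p q : ℕ} {P : Set (Fin p × Fin q)}

lemma genEntries_eq_some_iff {i : Fin p} {j : Fin q} {v : MvPolynomial P R} :
    genEntries R P i j = some v ↔ ∃ h : (i, j) ∈ P, X ⟨(i, j), h⟩ = v := by
  unfold genEntries
  split_ifs with h <;> simp [h]

lemma genEntries_coe (x : P) : genEntries R P x.1.1 x.1.2 = some (X x) :=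
  genEntries_eq_some_iff.2 ⟨x.2, rfl⟩

lemma prod_X_eq_monomial {ν : Type*} [Fintype ν] (A : ν → P) :
    ∏ l, (X (A l) : MvPolynomial P R) = monomial (∑ l, Finsupp.single (A l) 1) 1 :=
  (monomial_sum_one _ _).symm

variable {t : ℕ} {ρ : Fin t → Fin p} {γ : Fin t → Fin q} {σ τ : Equiv.Perm (Fin t)}

lemma margins_sum_single_eq {A B : Fin t → P} (hA : ∀ l, (A l).1 = (ρ l, γ (σ l)))
    (hB : ∀ l, (B l).1 = (ρ l, γ (τ l))) :
    margins (∑ l, Finsupp.single (A l) 1) = margins (∑ l, Finsupp.single (B l) 1) := by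
  simp only [map_sum, margins_single, hA, hB, Prod.ext_iff, Prod.fst_sum, Prod.snd_sum,
    true_and]
  rw [Equiv.sum_comp σ fun j => Finsupp.single (γ j) 1,
    Equiv.sum_comp τ fun j => Finsupp.single (γ j) 1]

lemma exists_monomials_of_genEntries {v w : Fin t → MvPolynomial P R}
    (hv : ∀ l, genEntries R P (ρ l) (γ (σ l)) = some (v l))
    (hw : ∀ l, genEntries R P (ρ l) (γ (τ l)) = some (w l)) :
    ∃ a b : P →₀ ℕ, margins a = margins b ∧ ∏ l, v l = monomial a 1 ∧
      ∏ l, w l = monomial b 1 := by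
  choose hvP hv using fun l => genEntries_eq_some_iff.1 (hv l)
  choose hwP hw using fun l => genEntries_eq_some_iff.1 (hw l)
  refine ⟨_, _, margins_sum_single_eq (A := fun l => ⟨_, hvP l⟩) (B := fun l => ⟨_, hwP l⟩)
    (fun _ => rfl) (fun _ => rfl), ?_, ?_⟩
  · simp only [← hv]
    exact prod_X_eq_monomial _
  · simp only [← hw]
    exact prod_X_eq_monomial _

lemma isBinQM_of_cells (ρ : Fin t ↪ Fin p) (γ : Fin t ↪ Fin q) (hστ : ∀ l, σ l ≠ τ l)
    {A B : Fin t → P} (hA : ∀ l, (A l).1 = (ρ l, γ (σ l)))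
    (hB : ∀ l, (B l).1 = (ρ l, γ (τ l))) :
    IsBinQM (genEntries R P)
      (monomial (∑ l, Finsupp.single (A l) 1) 1 - monomial (∑ l, Finsupp.single (B l) 1) 1) :=
  ⟨t, ρ, γ, σ, τ, fun l => X (A l), fun l => X (B l), hστ,
    fun l => by simpa [hA] using genEntries_coe (R := R) (A l),
    fun l => by simpa [hB] using genEntries_coe (R := R) (B l),
    by rw [prod_X_eq_monomial, prod_X_eq_monomial]⟩

end QuasiMinors

namespace Function

variable {α : Type*} {f : α → α} {x : α}

lemma exists_iterate_mem_periodicPts [Finite α] (f : α → α) (x : α) :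
    ∃ n, f^[n] x ∈ periodicPts f := by
  obtain ⟨i, j, hne, heq⟩ := Finite.exists_ne_map_eq_of_infinite (f^[·] x)
  wlog hij : i < j generalizing i j
  · exact this j i hne.symm heq.symm (hne.lt_or_gt.resolve_left hij)
  refine ⟨i, mk_mem_periodicPts (Nat.sub_pos_of_lt hij) ?_⟩
  rw [IsPeriodicPt, IsFixedPt, ← iterate_add_apply, Nat.sub_add_cancel hij.le]
  exact heq.symm

lemma iterate_finRotate_minimalPeriod (k : Fin (minimalPeriod f x)) :
    f^[finRotate _ k] x = f (f^[k] x) := by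
  have := k.neZero
  rw [← iterate_succ_apply' f, finRotate_apply, Fin.val_add, Fin.val_one', Nat.add_mod_mod,
    iterate_mod_minimalPeriod_eq]

end Function

lemma exists_alternating_cycle {ι κ : Type*} [Finite ι] {P : Set (ι × κ)} {α β : P →₀ ℕ}
    (hm : margins α = margins β) (hα : α ≠ 0) :
    ∃ (t : ℕ) (ρ : Fin t ↪ ι) (γ : Fin t ↪ κ) (τ : Equiv.Perm (Fin t)) (A B : Fin t → P),
      0 < t ∧ (∀ l, (A l).1 = (ρ l, γ l)) ∧ (∀ l, (B l).1 = (ρ l, γ (τ l))) ∧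
      (∀ l, A l ∈ α.support) ∧ (∀ l, B l ∈ β.support) := by
  obtain ⟨x₀, hx₀⟩ := Finsupp.support_nonempty_iff.2 hα
  have : Nonempty P := ⟨x₀⟩
  let S : Set ι := {i | ∃ x ∈ α.support, x.1.1 = i}
  let rowCell (i : ι) : P := Classical.epsilon fun x => x ∈ α.support ∧ x.1.1 = i
  let colCell (j : κ) : P := Classical.epsilon fun y => y ∈ β.support ∧ y.1.2 = j
  have hrowCell {i} (hi : i ∈ S) : rowCell i ∈ α.support ∧ (rowCell i).1.1 = i :=
    Classical.epsilon_spec hi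
  have hcolCell {x} (hx : x ∈ α.support) :
      colCell x.1.2 ∈ β.support ∧ (colCell x.1.2).1.2 = x.1.2 :=
    Classical.epsilon_spec (exists_mem_support_of_mapDomain_eq (congrArg Prod.snd hm) hx)
  -- A periodic orbit of `φ` is an alternating cycle: row, its `α`-cell, that cell's column,
  -- a `β`-cell in the column, whose row is the next row.
  let φ (i : ι) : ι := (colCell (rowCell i).1.2).1.1
  have hφ : Set.MapsTo φ S S := fun i hi =>
    exists_mem_support_of_mapDomain_eq (congrArg Prod.fst hm).symm
      (hcolCell (hrowCell hi).1).1
  obtain ⟨n, hn⟩ := exists_iterate_mem_periodicPts φ x₀.1.1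
  set r := φ^[n] x₀.1.1
  have hS (k : ℕ) : φ^[k] r ∈ S := hφ.iterate k (hφ.iterate n ⟨x₀, hx₀, rfl⟩)
  set t := minimalPeriod φ r
  let ρ : Fin t ↪ ι := ⟨fun k => φ^[k] r, fun k k' h =>
    Fin.ext (iterate_injOn_Iio_minimalPeriod k.2 k'.2 h)⟩
  have hnext (k : Fin t) : (colCell (rowCell (ρ k)).1.2).1.1 = ρ (finRotate t k) :=
    (iterate_finRotate_minimalPeriod k).symm
  let γ : Fin t ↪ κ := ⟨fun k => (rowCell (ρ k)).1.2, fun k k' h =>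
    (finRotate t).injective (ρ.injective ((hnext k).symm.trans (by simp only [h, hnext])))⟩
  refine ⟨t, ρ, γ, (finRotate t).symm, fun k => rowCell (ρ k),
    fun k => colCell (γ ((finRotate t).symm k)), minimalPeriod_pos_of_mem_periodicPts hn,
    fun k => Prod.ext (hrowCell (hS k)).2 rfl, fun k => Prod.ext ?_ ?_,
    fun k => (hrowCell (hS k)).1, fun k => (hcolCell (hrowCell (hS _)).1).1⟩
  · exact (hnext _).trans (congrArg ρ (Equiv.apply_symm_apply _ k))
  · exact (hcolCell (hrowCell (hS _)).1).2

section Cycles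

variable {R : Type*} [CommRing R] {p q : ℕ} {P : Set (Fin p × Fin q)}

lemma exists_isBinQM_le_of_disjoint {α β : P →₀ ℕ} (hdisj : Disjoint α.support β.support)
    (hm : margins α = margins β) (hα : α ≠ 0) :
    ∃ a b : P →₀ ℕ, a ≤ α ∧ b ≤ β ∧ a ≠ b ∧ margins a = margins b ∧
      IsBinQM (genEntries R P) (monomial a 1 - monomial b 1) := by
  obtain ⟨t, ρ, γ, τ, A, B, ht, hA, hB, hAα, hBβ⟩ := exists_alternating_cycle hm hα
  have hτ (l : Fin t) : (1 : Equiv.Perm (Fin t)) l ≠ τ l := fun h => by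
    refine Finset.disjoint_left.1 hdisj (hAα l) ?_
    rw [show A l = B l from Subtype.ext ((hA l).trans (by rw [hB, ← h]; rfl))]
    exact hBβ l
  have hinj {C : Fin t → P} (hC : ∀ l, (C l).1.1 = ρ l) : Function.Injective C :=
    fun l l' h => ρ.injective (by rw [← hC, ← hC, h])
  have hb : ∑ l, Finsupp.single (B l) 1 ≤ β := sum_single_one_le (hinj fun l => by rw [hB]) hBβ
  have hab : ∑ l, Finsupp.single (A l) 1 ≠ ∑ l, Finsupp.single (B l) 1 := by
    intro h
    have hβA : β (A ⟨0, ht⟩) = 0 :=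
      Finsupp.notMem_support_iff.1 (Finset.disjoint_left.1 hdisj (hAα _))
    have h0 : (∑ l, Finsupp.single (A l) 1) (A ⟨0, ht⟩) ≠ 0 := by
      rw [Finsupp.finsetSum_apply, Ne, Finset.sum_eq_zero_iff]
      exact fun h => by simpa using h ⟨0, ht⟩ (Finset.mem_univ _)
    exact h0 (Nat.le_zero.1 ((h ▸ hb) (A ⟨0, ht⟩) |>.trans_eq hβA))
  exact ⟨_, _, sum_single_one_le (hinj fun l => by rw [hA]) hAα, hb, hab,
    margins_sum_single_eq (σ := 1) hA hB, isBinQM_of_cells ρ γ hτ hA hB⟩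

lemma exists_isBinQM_le {α β : P →₀ ℕ} (hne : α ≠ β) (hm : margins α = margins β) :
    ∃ a b : P →₀ ℕ, a ≤ α ∧ b ≤ β ∧ a ≠ b ∧ margins a = margins b ∧
      IsBinQM (genEntries R P) (monomial a 1 - monomial b 1) := by
  set α' := α - α ⊓ β
  set β' := β - α ⊓ β
  have hdisj : Disjoint α'.support β'.support := Finset.disjoint_left.2 fun x hα hβ => by
    simp only [Finsupp.mem_support_iff, Finsupp.tsub_apply, Finsupp.inf_apply, α', β'] at hα hβ
    omega
  have hm' : margins α' = margins β' := add_right_cancel (b := margins (α ⊓ β)) <| by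
    rwa [← map_add, ← map_add, tsub_add_cancel_of_le inf_le_left,
      tsub_add_cancel_of_le inf_le_right]
  have hα' : α' ≠ 0 := by
    intro h0
    have hβ' : β' = 0 := by
      by_contra hβ'
      obtain ⟨x, hx⟩ := Finsupp.support_nonempty_iff.2 hβ'
      have h1 : margins β' = margins (0 : P →₀ ℕ) := by rw [← hm', h0]
      obtain ⟨y, hy, -⟩ := exists_mem_support_of_mapDomain_eq (e := 0) (congrArg Prod.fst h1) hx
      simp at hy
    rw [tsub_eq_zero_iff_le, le_inf_iff] at h0 hβ'
    exact hne (le_antisymm h0.2 hβ'.1)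
  obtain ⟨a, b, ha, hb, hab, habm, hbin⟩ := exists_isBinQM_le_of_disjoint (R := R) hdisj hm' hα'
  exact ⟨a, b, ha.trans tsub_le_self, hb.trans tsub_le_self, hab, habm, hbin⟩

end Cycles

section Reduction

variable {R : Type*} [CommRing R] [Nontrivial R] {p q : ℕ} {P : Set (Fin p × Fin q)}
  (m : MonomialOrd P)

theorem hasBoundedRep_monomial_sub_monomial {δ : P →₀ ℕ} (α β : P →₀ ℕ)
    (hm : margins α = margins β) (hα : m.le α δ) (hβ : m.le β δ) :
    HasBoundedRep m {x | IsBinQM (genEntries R P) x} (monomial α 1 - monomial β 1) δ := by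
  induction α, β using Prod.GameAdd.recursion m.wellFounded_lt m.wellFounded_lt with
  | _ α β ih =>
    by_cases hαβ : α = β
    · rw [hαβ, sub_self]
      exact hasBoundedRep_zero m _ δ
    obtain ⟨a, b, ha, hb, hab, habm, hbin⟩ := exists_isBinQM_le (R := R) hαβ hm
    rcases m.total b a with hba | hab'
    · have hlt := m.tsub_add_lt ha ⟨hba, hab.symm⟩
      have hrest := ih _ β (.fst hlt) (by rwa [margins_tsub_add ha habm])
        (m.trans _ _ _ hlt.1 hα) hβ
      convert hrest.monomial_mul_add hbin
        (isLM_monomial_sub_monomial m hab (m.refl a) hba (.inl rfl))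
        (by rwa [tsub_add_cancel_of_le ha]) using 1
      rw [mul_sub, monomial_mul, monomial_mul, one_mul, tsub_add_cancel_of_le ha]
      ring
    · have hlt := m.tsub_add_lt hb ⟨hab', hab⟩
      have hrest := ih α _ (.snd hlt) (by rwa [margins_tsub_add hb habm.symm]) hα
        (m.trans _ _ _ hlt.1 hβ)
      convert hrest.monomial_mul_add hbin
        (isLM_monomial_sub_monomial m hab hab' (m.refl b) (.inr rfl))
        (by rwa [tsub_add_cancel_of_le hb]) using 1
      rw [mul_sub, monomial_mul, monomial_mul, one_mul, tsub_add_cancel_of_le hb]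
      ring

theorem redZero_monomial_sub_monomial {α β : P →₀ ℕ} (hm : margins α = margins β) :
    RedZero m {x | IsBinQM (genEntries R P) x} (monomial α 1 - monomial β 1) := by
  by_cases hαβ : α = β
  · rw [hαβ, sub_self]
    exact redZero_zero
  rcases m.total β α with h | h
  · exact .of_hasBoundedRep (isLM_monomial_sub_monomial m hαβ (m.refl α) h (.inl rfl))
      (hasBoundedRep_monomial_sub_monomial m α β hm (m.refl α) h)
  · exact .of_hasBoundedRep (isLM_monomial_sub_monomial m hαβ h (m.refl β) (.inr rfl))
      (hasBoundedRep_monomial_sub_monomial m α β hm h (m.refl β))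

end Reduction

theorem stmt9_general {R : Type*} [CommRing R] {p q : ℕ} (P : Set (Fin p × Fin q))
    (m : MonomialOrd P)
    {nf ng : ℕ}
    (ρf : Fin nf ↪ Fin p) (γf : Fin nf ↪ Fin q) (σf τf : Equiv.Perm (Fin nf))
    (V W : Fin nf → MvPolynomial P R)
    (hV : ∀ l, genEntries R P (ρf l) (γf (σf l)) = some (V l))
    (hW : ∀ l, genEntries R P (ρf l) (γf (τf l)) = some (W l))
    (ρg : Fin ng ↪ Fin p) (γg : Fin ng ↪ Fin q) (σg τg : Equiv.Perm (Fin ng))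
    (Y Z : Fin ng → MvPolynomial P R)
    (hY : ∀ l, genEntries R P (ρg l) (γg (σg l)) = some (Y l))
    (hZ : ∀ l, genEntries R P (ρg l) (γg (τg l)) = some (Z l))
    (f g : MvPolynomial P R)
    (hf : f = ∏ l, V l - ∏ l, W l) (hg : g = ∏ l, Y l - ∏ l, Z l)
    (δf δg : P →₀ ℕ)
    (hltf : MvPolynomial.monomial δf (MvPolynomial.coeff δf f) = ∏ l, V l)
    (hltg : MvPolynomial.monomial δg (MvPolynomial.coeff δg g) = ∏ l, Y l) :
    RedZero m {x | IsBinQM (genEntries R P) x}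
      (MvPolynomial.monomial ((δf ⊔ δg) - δf) 1 * f -
        MvPolynomial.monomial ((δf ⊔ δg) - δg) 1 * g) := by
  rcases subsingleton_or_nontrivial R with _ | _
  · rw [Subsingleton.elim (_ - _) 0]
    exact redZero_zero
  obtain ⟨a, b, hab, hVa, hWb⟩ := exists_monomials_of_genEntries hV hW
  obtain ⟨c, d, hcd, hYc, hZd⟩ := exists_monomials_of_genEntries hY hZ
  obtain ⟨rfl, -⟩ : δf = a ∧ _ := by
    simpa using (monomial_eq_monomial_iff _ _ _ _).1 (hltf.trans hVa)
  obtain ⟨rfl, -⟩ : δg = c ∧ _ := by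
    simpa using (monomial_eq_monomial_iff _ _ _ _).1 (hltg.trans hYc)
  have hS : monomial (δf ⊔ δg - δf) 1 * f - monomial (δf ⊔ δg - δg) 1 * g =
      monomial (δf ⊔ δg - δg + d) (1 : R) - monomial (δf ⊔ δg - δf + b) 1 := by
    rw [hf, hg, hVa, hWb, hYc, hZd, mul_sub, mul_sub, monomial_mul, monomial_mul, monomial_mul,
      monomial_mul, one_mul, tsub_add_cancel_of_le le_sup_left,
      tsub_add_cancel_of_le le_sup_right]
    ring
  rw [hS]
  exact redZero_monomial_sub_monomial m <| (margins_tsub_add le_sup_right hcd).trans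
    (margins_tsub_add le_sup_left hab).symm

/-- Let `f = V₁⋯V_n − W₁⋯W_n` (`n ≥ 2`) and `g = Y₁⋯Y_m − Z₁⋯Z_m` be binary quasi-minors
of a generic quasi-matrix, with leading terms `V₁⋯V_n` and `Y₁⋯Y_m`. Then for any monomial
order the `S`-polynomial `S(f,g)` reduces to zero modulo the set of all binary quasi-minors. -/
theorem stmt9 {R : Type*} [CommRing R] {p q : ℕ} (P : Set (Fin p × Fin q))
    (m : MonomialOrd P)
    {nf ng : ℕ} (hnf : 2 ≤ nf)
    (ρf : Fin nf ↪ Fin p) (γf : Fin nf ↪ Fin q) (σf τf : Equiv.Perm (Fin nf))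
    (V W : Fin nf → MvPolynomial P R)
    (hστf : ∀ l, σf l ≠ τf l)
    (hV : ∀ l, genEntries R P (ρf l) (γf (σf l)) = some (V l))
    (hW : ∀ l, genEntries R P (ρf l) (γf (τf l)) = some (W l))
    (ρg : Fin ng ↪ Fin p) (γg : Fin ng ↪ Fin q) (σg τg : Equiv.Perm (Fin ng))
    (Y Z : Fin ng → MvPolynomial P R)
    (hστg : ∀ l, σg l ≠ τg l)
    (hY : ∀ l, genEntries R P (ρg l) (γg (σg l)) = some (Y l))
    (hZ : ∀ l, genEntries R P (ρg l) (γg (τg l)) = some (Z l))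
    (f g : MvPolynomial P R)
    (hf : f = ∏ l, V l - ∏ l, W l) (hg : g = ∏ l, Y l - ∏ l, Z l)
    (δf δg : P →₀ ℕ) (hlmf : IsLM m f δf) (hlmg : IsLM m g δg)
    (hltf : MvPolynomial.monomial δf (MvPolynomial.coeff δf f) = ∏ l, V l)
    (hltg : MvPolynomial.monomial δg (MvPolynomial.coeff δg g) = ∏ l, Y l) :
    RedZero m {x | IsBinQM (genEntries R P) x}
      (MvPolynomial.monomial ((δf ⊔ δg) - δf) 1 * f -
        MvPolynomial.monomial ((δf ⊔ δg) - δg) 1 * g) :=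
  stmt9_general P m ρf γf σf τf V W hV hW ρg γg σg τg Y Z hY hZ f g hf hg δf δg hltf hltg
end

section
/- With notation as in the theorem on the multi-Rees algebra, every binary quasi-minor of E_a involving one of the elements s_i (an s-binary quasi-minor) lies in the ideal generated by the 2×2 minors of E_a involving two of the s_i and the binary quasi-minors of E_a involving only the variables T_{l,j}. -/
open MvPolynomial

open MvPolynomial

/-- `s^j = ∏ i, s i ^ (j_{i+1} − j_i)` for a weakly increasing tuple
`j = (j_0, j_1, …, j_n)`. -/
def sPow {R : Type*} [CommRing R] {n : ℕ} (s : Fin n → R) (j : Fin (n + 1) → ℕ) : R :=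
  ∏ i : Fin n, s i ^ (j i.succ - j i.castSucc)

/-- `j ∈ F^l_a`: `j` is weakly increasing with `j 0 = 0`, `j n = a`, and the monomial
`s^j` lies in `I^a`. -/
def FMem {R : Type*} [CommRing R] {n : ℕ} (s : Fin n → R) (a : ℕ) (I : Ideal R)
    (j : Fin (n + 1) → ℕ) : Prop :=
  Monotone j ∧ j 0 = 0 ∧ j (Fin.last n) = a ∧ sPow s j ∈ I ^ a

/-- `j ∈ T'_a`: `j` is weakly increasing with `j 0 = 1` and `j n = a`. -/
def TMem' {n : ℕ} (a : ℕ) (j : Fin (n + 1) → ℕ) : Prop :=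
  Monotone j ∧ j 0 = 1 ∧ j (Fin.last n) = a

/-- `j^{|k⟩}`: decrease by `1` the entries `j_0, …, j_{k−1}` of `j ∈ T'_a` (indexed so that
row `k : Fin n` corresponds to the `(k+1)`-st member of the sequence). -/
def restr {n : ℕ} (j : Fin (n + 1) → ℕ) (k : Fin n) : Fin (n + 1) → ℕ :=
  fun i => if (i : ℕ) ≤ (k : ℕ) then j i - 1 else j i

/-- The variables `T_{l,j}` of the presentation of `R[I₁^{a₁}t₁,…,I_r^{a_r}t_r]`,
indexed by `l` and the monomial generators `s^j` of `I_l^{a_l}`. -/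
def ReesVars {R : Type*} [CommRing R] (n r : ℕ) (s : Fin n → R) (a : Fin r → ℕ)
    (G : Fin r → Set (Fin n)) : Type _ :=
  (l : Fin r) × {j : Fin (n + 1) → ℕ // FMem s (a l) (Ideal.span (s '' G l)) j}

open Classical in
/-- The quasi-matrix `E_a = (s | D_{a₁} | … | D_{a_r})`: the first column holds
`s_1, …, s_n`; the column indexed by `(l, j')` with `j' ∈ T'_{a_l}` has the entry
`T_{l, j'^{|k⟩}}` in row `k` whenever `s^{j'^{|k⟩}} ∈ I_l^{a_l}`. -/
noncomputable def reesEntries {R : Type*} [CommRing R] (n r : ℕ) (s : Fin n → R)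
    (a : Fin r → ℕ) (G : Fin r → Set (Fin n)) :
    Fin n → (Unit ⊕ ((l : Fin r) × {j : Fin (n + 1) → ℕ // TMem' (a l) j})) →
      Option (MvPolynomial (ReesVars n r s a G) R) :=
  fun k c =>
    Sum.elim (fun _ => some (C (s k)))
      (fun d =>
        if h : FMem s (a d.1) (Ideal.span (s '' G d.1)) (restr d.2.1 k) then
          some (X ⟨d.1, restr d.2.1 k, h⟩)
        else none) c


/-- An `s`-binary quasi-minor of a quasi-matrix whose first (distinguished) column is the
`Unit` summand: a binary quasi-minor one of whose chosen columns is the `s`-column. -/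
def IsSBinQM {S : Type*} [CommRing S] {ι κ : Type*} (e : ι → (Unit ⊕ κ) → Option S)
    (x : S) : Prop :=
  ∃ (nn : ℕ) (ρ : Fin nn ↪ ι) (γ : Fin nn ↪ (Unit ⊕ κ)) (σ τ : Equiv.Perm (Fin nn))
    (v w : Fin nn → S),
    (∀ l, σ l ≠ τ l) ∧ (∀ l, e (ρ l) (γ (σ l)) = some (v l)) ∧
    (∀ l, e (ρ l) (γ (τ l)) = some (w l)) ∧
    (∃ l₀, γ l₀ = Sum.inl ()) ∧
    x = ∏ l, v l - ∏ l, w l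

/-- A `T`-binary quasi-minor: a binary quasi-minor all of whose chosen columns avoid the
`s`-column, so it involves only the variables `T_{l,j}`. -/
def IsTBinQM {S : Type*} [CommRing S] {ι κ : Type*} (e : ι → (Unit ⊕ κ) → Option S)
    (x : S) : Prop :=
  ∃ (nn : ℕ) (ρ : Fin nn ↪ ι) (γ : Fin nn ↪ (Unit ⊕ κ)) (σ τ : Equiv.Perm (Fin nn))
    (v w : Fin nn → S),
    (∀ l, σ l ≠ τ l) ∧ (∀ l, e (ρ l) (γ (σ l)) = some (v l)) ∧
    (∀ l, e (ρ l) (γ (τ l)) = some (w l)) ∧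
    (∀ l, ∃ d, γ l = Sum.inr d) ∧
    x = ∏ l, v l - ∏ l, w l

/-!
Encode a binary quasi-minor as `∏ l, v l - ∏ l, w l`, where row `l` contributes its entry in
column `γ l` to the first product and its entry in column `γ (π l)` to the second, for a
permutation `π` of the rows; rows fixed by `π` contribute equal factors. If a row `l₁` moved by
`π` has its `s`-entry in the first product, trading it for the `s`-entry of row `π l₁` changes
the difference by a multiple of the `2 × 2` minor of rows `l₁`, `π l₁` in the `s`-column and
column `γ (π l₁)`, and `l₁` becomes a fixed point of `swap l₁ (π l₁) * π`. This shrinks the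
support of `π`, so eventually no moved row meets the `s`-column, and the difference is a product
of fixed entries times a `T`-binary quasi-minor.
-/

open Equiv Finset

section QuasiMatrix

variable {S ι κ : Type*} [CommRing S] {e : ι → (Unit ⊕ κ) → Option S}
  {L : Type*} [Fintype L]

lemma isTBinQM_of_derangement (ρ : L ↪ ι) (γ : L ↪ (Unit ⊕ κ)) (π : Perm L)
    (hπ : ∀ l, π l ≠ l) (hγ : ∀ l, ∃ d, γ l = Sum.inr d) (v w : L → S)
    (hv : ∀ l, e (ρ l) (γ l) = some (v l)) (hw : ∀ l, e (ρ l) (γ (π l)) = some (w l)) :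
    IsTBinQM e (∏ l, v l - ∏ l, w l) := by
  let q := Fintype.equivFin L
  refine ⟨Fintype.card L, q.symm.toEmbedding.trans ρ, q.symm.toEmbedding.trans γ, 1,
    q.permCongr π, v ∘ q.symm, w ∘ q.symm, fun k hk => ?_, fun k => hv _, fun k => ?_,
    fun k => hγ _, ?_⟩
  · exact hπ (q.symm k) (by simpa [Equiv.permCongr_apply, Equiv.eq_symm_apply] using hk.symm)
  · simpa [Equiv.permCongr_apply] using hw (q.symm k)
  · simp only [Function.comp_apply, ← Equiv.prod_comp q.symm]

variable [DecidableEq L] {ρ : L ↪ ι} {γ : L ↪ (Unit ⊕ κ)} {π : Perm L} {v w : L → S}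

lemma prod_sub_prod_eq_mul_support
    (hv : ∀ l, e (ρ l) (γ l) = some (v l)) (hw : ∀ l, e (ρ l) (γ (π l)) = some (w l)) :
    ∏ l, v l - ∏ l, w l =
      (∏ l ∈ π.supportᶜ, v l) * (∏ l : π.support, v l - ∏ l : π.support, w l) := by
  have hfix : ∏ l ∈ π.supportᶜ, w l = ∏ l ∈ π.supportᶜ, v l := by
    refine prod_congr rfl fun l hl => Option.some_injective _ ?_
    rw [← hw, ← hv, Perm.notMem_support.mp (mem_compl.mp hl)]
  rw [← prod_mul_prod_compl π.support v, ← prod_mul_prod_compl π.support w, hfix,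
    prod_coe_sort, prod_coe_sort]
  ring

lemma isTBinQM_support (hγ : ∀ l ∈ π.support, ∃ d, γ l = Sum.inr d)
    (hv : ∀ l, e (ρ l) (γ l) = some (v l)) (hw : ∀ l, e (ρ l) (γ (π l)) = some (w l)) :
    IsTBinQM e (∏ l : π.support, v l - ∏ l : π.support, w l) :=
  isTBinQM_of_derangement ((Function.Embedding.subtype _).trans ρ)
    ((Function.Embedding.subtype _).trans γ) π.subtypePermOfSupport
    (fun l hl => Perm.mem_support.mp l.2 (congrArg Subtype.val hl)) (fun l => hγ l l.2)
    _ _ (fun l => hv l) (fun l => hw l)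

lemma prod_eq_mul_mul_prod_erase_erase {M : Type*} [CommMonoid M] (g : L → M) {a b : L}
    (hab : b ≠ a) : ∏ l, g l = g a * g b * ∏ l ∈ (univ.erase a).erase b, g l := by
  rw [← mul_prod_erase univ g (mem_univ a),
    ← mul_prod_erase _ g (mem_erase.mpr ⟨hab, mem_univ b⟩), mul_assoc]

lemma exists_prod_sub_prod_mem_of_sColumn (f : ι → S) (hf : ∀ i, e i (Sum.inl ()) = some (f i))
    {I : Ideal S} (hminor : ∀ i i' c v w, i ≠ i' → e i (Sum.inr c) = some v →
      e i' (Sum.inr c) = some w → f i * w - f i' * v ∈ I)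
    {l₁ : L} (hl₁ : π l₁ ≠ l₁) (hγ : γ l₁ = Sum.inl ())
    (hv : ∀ l, e (ρ l) (γ l) = some (v l)) (hw : ∀ l, e (ρ l) (γ (π l)) = some (w l)) :
    ∃ v' : L → S, (∀ l, e (ρ l) (γ (swap l₁ (π l₁) l)) = some (v' l)) ∧
      ∏ l, v l - ∏ l, v' l ∈ I := by
  set m := π l₁
  obtain ⟨c, hc⟩ : ∃ c, γ m = Sum.inr c := by
    rcases hγm : γ m with ⟨⟩ | c
    · exact absurd (γ.injective (hγm.trans hγ.symm)) hl₁
    · exact ⟨c, rfl⟩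
  refine ⟨Function.update (Function.update v m (f (ρ m))) l₁ (w l₁), fun l => ?_, ?_⟩
  · rcases eq_or_ne l l₁ with rfl | h₁
    · simpa [swap_apply_left] using hw l
    rcases eq_or_ne l m with rfl | hm
    · simpa [swap_apply_right, h₁, hγ] using hf (ρ m)
    · simpa [swap_apply_of_ne_of_ne h₁ hm, h₁, hm] using hv l
  · have hvl₁ : v l₁ = f (ρ l₁) := Option.some_injective _ ((hv l₁).symm.trans (hγ ▸ hf _))
    have hmin := hminor (ρ m) (ρ l₁) c (v m) (w l₁) (ρ.injective.ne hl₁) (hc ▸ hv m)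
      (hc ▸ hw l₁)
    have hrest : ∏ l ∈ (univ.erase l₁).erase m,
        Function.update (Function.update v m (f (ρ m))) l₁ (w l₁) l =
          ∏ l ∈ (univ.erase l₁).erase m, v l :=
      prod_congr rfl fun l hl => by
        rw [Function.update_of_ne (mem_erase.mp (mem_erase.mp hl).2).1,
          Function.update_of_ne (mem_erase.mp hl).1]
    rw [prod_eq_mul_mul_prod_erase_erase v hl₁, prod_eq_mul_mul_prod_erase_erase _ hl₁, hrest,
      Function.update_self, Function.update_of_ne hl₁, Function.update_self, hvl₁]
    convert neg_mem (I.mul_mem_left (∏ l ∈ (univ.erase l₁).erase m, v l) hmin) using 1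
    ring

theorem prod_sub_prod_mem_of_minors_mem (f : ι → S) (hf : ∀ i, e i (Sum.inl ()) = some (f i))
    {I : Ideal S} (hminor : ∀ i i' c v w, i ≠ i' → e i (Sum.inr c) = some v →
      e i' (Sum.inr c) = some w → f i * w - f i' * v ∈ I)
    (hT : ∀ y, IsTBinQM e y → y ∈ I) (ρ : L ↪ ι) (γ : L ↪ (Unit ⊕ κ)) (π : Perm L)
    (v w : L → S) (hv : ∀ l, e (ρ l) (γ l) = some (v l))
    (hw : ∀ l, e (ρ l) (γ (π l)) = some (w l)) :
    ∏ l, v l - ∏ l, w l ∈ I := by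
  by_cases hs : ∃ l₁ ∈ π.support, γ l₁ = Sum.inl ()
  · obtain ⟨l₁, hl₁, hγ⟩ := hs
    obtain ⟨v', hv', hvv'⟩ := exists_prod_sub_prod_mem_of_sColumn f hf hminor
      (Perm.mem_support.mp hl₁) hγ hv hw
    have hrest := prod_sub_prod_mem_of_minors_mem f hf hminor hT ρ
      ((swap l₁ (π l₁)).toEmbedding.trans γ) (swap l₁ (π l₁) * π) v' w hv'
      (fun l => by simpa [swap_apply_self] using hw l)
    simpa using add_mem hvv' hrest
  · push Not at hs
    have hγ : ∀ l ∈ π.support, ∃ d, γ l = Sum.inr d := fun l hl => by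
      rcases hγl : γ l with ⟨⟩ | d
      exacts [absurd hγl (hs l hl), ⟨d, rfl⟩]
    rw [prod_sub_prod_eq_mul_support hv hw]
    exact I.mul_mem_left _ (hT _ (isTBinQM_support hγ hv hw))
termination_by π.support.card
decreasing_by exact Perm.card_support_swap_mul (Perm.mem_support.mp hl₁)

end QuasiMatrix

theorem stmt13_general {R : Type*} [CommRing R] {n r : ℕ}
    (s : Fin n → R)
    (a : Fin r → ℕ) (G : Fin r → Set (Fin n))
    (x : MvPolynomial (ReesVars n r s a G) R)
    (hx : IsSBinQM (reesEntries n r s a G) x) :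
    x ∈ Ideal.span
      ({y | ∃ i i' : Fin n, i ≠ i' ∧
          ∃ (c : (l : Fin r) × {j : Fin (n + 1) → ℕ // TMem' (a l) j})
            (v w : MvPolynomial (ReesVars n r s a G) R),
            reesEntries n r s a G i (Sum.inr c) = some v ∧
            reesEntries n r s a G i' (Sum.inr c) = some w ∧
            y = C (s i) * w - C (s i') * v} ∪
        {y | IsTBinQM (reesEntries n r s a G) y}) := by
  obtain ⟨nn, ρ, γ, σ, τ, v, w, -, hv, hw, -, rfl⟩ := hx
  refine prod_sub_prod_mem_of_minors_mem (fun i => C (s i)) (fun i => rfl)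
    (fun i i' c v w hii' hv hw => Ideal.subset_span (Or.inl ⟨i, i', hii', c, v, w, hv, hw, rfl⟩))
    (fun y hy => Ideal.subset_span (Or.inr hy)) ρ (σ.toEmbedding.trans γ) (σ⁻¹ * τ) v w hv
    (fun l => by simpa using hw l)

/-- Every `s`-binary quasi-minor of `E_a` lies in the ideal generated by the `2 × 2` minors
of `E_a` involving two of the `s_i` together with the `T`-binary quasi-minors of `E_a`. -/
theorem stmt13 {R : Type*} [CommRing R] [IsNoetherianRing R] {n r : ℕ}
    (s : Fin n → R) (hs : IsPermWeakRegSeq s) (hnu : ∀ i, ¬ IsUnit (s i))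
    (a : Fin r → ℕ) (ha : ∀ l, 0 < a l) (G : Fin r → Set (Fin n))
    (x : MvPolynomial (ReesVars n r s a G) R)
    (hx : IsSBinQM (reesEntries n r s a G) x) :
    x ∈ Ideal.span
      ({y | ∃ i i' : Fin n, i ≠ i' ∧
          ∃ (c : (l : Fin r) × {j : Fin (n + 1) → ℕ // TMem' (a l) j})
            (v w : MvPolynomial (ReesVars n r s a G) R),
            reesEntries n r s a G i (Sum.inr c) = some v ∧
            reesEntries n r s a G i' (Sum.inr c) = some w ∧
            y = C (s i) * w - C (s i') * v} ∪
        {y | IsTBinQM (reesEntries n r s a G) y}) :=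
  stmt13_general s a G x hx
end

section
/- Let a, b, c, d, e, f, g, h be distinct indeterminates and consider the binary quasi-matrix with rows (a,b,-,-), (c,d,-,-), (-,-,e,f), (-,-,g,h) (dashes denote empty positions). Then both adeh − bcgf and adgf − bceh are binary quasi-determinants of this quasi-matrix, and they are not equal up to sign; in particular, binary quasi-determinants of a binary n×n quasi-matrix with n ≥ 4 are not unique up to sign. -/
open MvPolynomial

/-- `x` is a binary quasi-determinant of the `n × n` quasi-matrix `e` (entries `Option`-valued,
`none` meaning an empty position): there are permutations `σ, τ` with `σ l ≠ τ l` for all `l`,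
all positions `(l, σ l)` and `(l, τ l)` are occupied, and `x` is the difference of the two
corresponding products of entries. -/
def IsBinaryQuasiDet {S : Type*} [CommRing S] {n : ℕ}
    (e : Fin n → Fin n → Option S) (x : S) : Prop :=
  ∃ σ τ : Equiv.Perm (Fin n), (∀ l, σ l ≠ τ l) ∧
    ∃ v w : Fin n → S,
      (∀ l, e l (σ l) = some (v l)) ∧ (∀ l, e l (τ l) = some (w l)) ∧
      x = ∏ l, v l - ∏ l, w l

/-- For the binary quasi-matrix with rows `(a,b,-,-), (c,d,-,-), (-,-,e,f), (-,-,g,h)` in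
distinct indeterminates (here `a = X 0, …, h = X 7`), both `adeh − bcgf` and `adgf − bceh`
are binary quasi-determinants, and they are not equal even up to sign: binary
quasi-determinants of an `n × n` binary quasi-matrix with `n ≥ 4` are not unique up to sign. -/
theorem stmt16 :
    let x : Fin 8 → MvPolynomial (Fin 8) ℤ := X
    let Q : Fin 4 → Fin 4 → Option (MvPolynomial (Fin 8) ℤ) :=
      ![![some (x 0), some (x 1), none, none],
        ![some (x 2), some (x 3), none, none],
        ![none, none, some (x 4), some (x 5)],
        ![none, none, some (x 6), some (x 7)]]
    -- each nonempty row and column of `Q` has exactly two entries (it is binary)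
    (∀ i, (Finset.univ.filter fun j => Q i j ≠ none).card = 2) ∧
    (∀ j, (Finset.univ.filter fun i => Q i j ≠ none).card = 2) ∧
    IsBinaryQuasiDet Q (x 0 * x 3 * x 4 * x 7 - x 1 * x 2 * x 6 * x 5) ∧
    IsBinaryQuasiDet Q (x 0 * x 3 * x 6 * x 5 - x 1 * x 2 * x 4 * x 7) ∧
    x 0 * x 3 * x 4 * x 7 - x 1 * x 2 * x 6 * x 5 ≠
      x 0 * x 3 * x 6 * x 5 - x 1 * x 2 * x 4 * x 7 ∧
    x 0 * x 3 * x 4 * x 7 - x 1 * x 2 * x 6 * x 5 ≠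
      -(x 0 * x 3 * x 6 * x 5 - x 1 * x 2 * x 4 * x 7) := by
  intro x Q
  -- At a = d = e = h = 1, b = c = f = g = 0 the first quasi-determinant is 1, the second 0.
  have separate : ∀ p q : MvPolynomial (Fin 8) ℤ,
      eval ![1, 0, 0, 1, 1, 0, 0, 1] p ≠ eval ![1, 0, 0, 1, 1, 0, 0, 1] q → p ≠ q :=
    fun p q h hpq => h (congrArg _ hpq)
  refine ⟨?rows, ?cols, ?first, ?second, ?ne, ?ne_neg⟩
  case rows => intro i; fin_cases i <;> decide
  case cols => intro j; fin_cases j <;> decide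
  case first =>
    refine ⟨1, Equiv.swap 0 1 * Equiv.swap 2 3, by decide,
      ![x 0, x 3, x 4, x 7], ![x 1, x 2, x 5, x 6], ?_, ?_, ?_⟩
    · intro l; fin_cases l <;> rfl
    · intro l; fin_cases l <;> rfl
    · simp only [Fin.prod_univ_four, Matrix.cons_val_zero, Matrix.cons_val_one, Matrix.cons_val]
      ring
  case second =>
    refine ⟨Equiv.swap 2 3, Equiv.swap 0 1, by decide,
      ![x 0, x 3, x 5, x 6], ![x 1, x 2, x 4, x 7], ?_, ?_, ?_⟩
    · intro l; fin_cases l <;> rfl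
    · intro l; fin_cases l <;> rfl
    · simp only [Fin.prod_univ_four, Matrix.cons_val_zero, Matrix.cons_val_one, Matrix.cons_val]
      ring
  case ne => exact separate _ _ (by simp [x])
  case ne_neg => exact separate _ _ (by simp [x])
end
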